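/- Let (X, Π) be a weighted pure d-dimensional simplicial complex and let 1 ≤ k ≤ d. Suppose γ_{k−2} ≤ 1/(k+1) and γ_j < 1 for every −1 ≤ j ≤ k−2 (i.e., the link walk matrix M_α has λ₂(M_α) < 1 for every face α of dimension at most k−2). Then λ₂(P∨_k) = λ₂(P∧_{k−1}) ≤ 1 − 1/(k+1)². -/

import Mathlib

open Finset

/-- A weighted pure `d`-dimensional simplicial complex on a finite ground set `V`.
Faces are finsets; a face of cardinality `m` has dimension `m - 1` (so `X(j)` is the
set of faces of cardinality `j + 1`).  The family of faces is downward closed, every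
face is contained in a face of cardinality `d + 1` (purity), and a probability
distribution `Π = Π_d` (positive weights summing to `1`) is given on the
top-dimensional faces. -/
structure WSC (V : Type*) [DecidableEq V] [Fintype V] (d : ℕ) where
  faces : Finset (Finset V)
  empty_mem : ∅ ∈ faces
  down_closed : ∀ β ∈ faces, ∀ α ⊆ β, α ∈ faces
  pure : ∀ α ∈ faces, ∃ β ∈ faces, α ⊆ β ∧ β.card = d + 1
  dim_le : ∀ α ∈ faces, α.card ≤ d + 1
  weight : Finset V → ℝ
  weight_pos : ∀ β ∈ faces, β.card = d + 1 → 0 < weight β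
  weight_zero : ∀ β : Finset V, β ∉ faces ∨ β.card ≠ d + 1 → weight β = 0
  weight_sum : ∑ β ∈ faces.filter (fun β => β.card = d + 1), weight β = 1

namespace WSC

variable {V : Type*} [DecidableEq V] [Fintype V] {d : ℕ}

/-- Auxiliary recursion for the marginal distributions: `Waux X t` is the marginal
distribution `Π_{d - t}` on faces of cardinality `d + 1 - t`, defined by
`Π_j(α) = (1/(j+2)) ∑_{β ∈ X(j+1), β ⊇ α} Π_{j+1}(β)`. -/
noncomputable def Waux (X : WSC V d) : ℕ → Finset V → ℝ
  | 0 => X.weight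
  | (t + 1) => fun α =>
      (1 / ((d + 1 - t : ℕ) : ℝ)) *
        ∑ β ∈ X.faces.filter (fun β => α ⊆ β ∧ β.card = d + 1 - t), X.Waux t β

/-- `X.W m α` is the marginal probability `Π_{m-1}(α)` of the face `α` of cardinality
`m` (dimension `m - 1`). -/
noncomputable def W (X : WSC V d) (m : ℕ) : Finset V → ℝ := X.Waux (d + 1 - m)

/-- The inner product `⟨f, g⟩_{Π_{m-1}}` on `ℝ^{X(m-1)}` (faces of cardinality `m`). -/
noncomputable def inn (X : WSC V d) (m : ℕ) (f g : Finset V → ℝ) : ℝ :=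
  ∑ α ∈ X.faces.filter (fun α => α.card = m), X.W m α * f α * g α

/-- The up operator `U_j`: `(U_j f)(β) = (1/(j+2)) ∑_{x ∈ β} f(β \ {x})`, for `β` of
cardinality `j + 2`.  (The formula is uniform in the cardinality of `β`.) -/
noncomputable def upOp (f : Finset V → ℝ) : Finset V → ℝ :=
  fun β => (1 / (β.card : ℝ)) * ∑ x ∈ β, f (β.erase x)

/-- The down operator `D_{j+1}`:
`(D_{j+1} g)(α) = ∑_{β ∈ X(j+1), β ⊇ α} Π_{j+1}(β) g(β) / ((j+2) Π_j(α))`, for `α` of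
cardinality `j + 1`.  (The formula is uniform in the cardinality of `α`.) -/
noncomputable def downOp (X : WSC V d) (g : Finset V → ℝ) : Finset V → ℝ :=
  fun α => ∑ β ∈ X.faces.filter (fun β => α ⊆ β ∧ β.card = α.card + 1),
      (X.W (α.card + 1) β * g β) / (((α.card : ℝ) + 1) * X.W α.card α)

/-- The down-up walk `P∨_k = U_{k-1} D_k`, acting on functions on `X(k)` (faces of
cardinality `k + 1`). -/
noncomputable def downUp (X : WSC V d) (f : Finset V → ℝ) : Finset V → ℝ :=
  upOp (X.downOp f)

/-- The up-down walk `P∧_k = D_{k+1} U_k`, acting on functions on `X(k)` (faces of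
cardinality `k + 1`). -/
noncomputable def upDown (X : WSC V d) (f : Finset V → ℝ) : Finset V → ℝ :=
  X.downOp (upOp f)

/-- The `k`-th non-lazy up-down walk `N_k = ((k+2)/(k+1)) (P∧_k - (1/(k+2)) I)`. -/
noncomputable def nonLazy (X : WSC V d) (k : ℕ) (f : Finset V → ℝ) : Finset V → ℝ :=
  fun α => (((k : ℝ) + 2) / ((k : ℝ) + 1)) * (X.upDown f α - (1 / ((k : ℝ) + 2)) * f α)

/-- The up-down walk `U_{a,b} = D_{a+1} ⋯ D_b · U_{b-1} ⋯ U_a` on `X(a)` through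
`X(b)`, where `t = b - a`. -/
noncomputable def upDownAB (X : WSC V d) (t : ℕ) (f : Finset V → ℝ) : Finset V → ℝ :=
  (X.downOp)^[t] (upOp^[t] f)

/-- The second largest eigenvalue of a row-stochastic operator `M` on `ℝ^{X(m-1)}`
(faces of cardinality `m`) which is self-adjoint with respect to `⟨·,·⟩_{Π_{m-1}}`
and has stationary distribution `Π_{m-1}`: by the variational principle it is the
supremum of the Rayleigh quotients of (nonzero) functions orthogonal to the
constant function `1`. -/
noncomputable def lam2 (X : WSC V d) (m : ℕ) (M : (Finset V → ℝ) → Finset V → ℝ) : ℝ :=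
  sSup { r : ℝ | ∃ f : Finset V → ℝ,
    X.inn m f (fun _ => 1) = 0 ∧ X.inn m f f ≠ 0 ∧
    r = X.inn m f (M f) / X.inn m f f }

/-- The vertices of the link `X_α`: those `x ∉ α` with `α ∪ {x} ∈ X`. -/
def linkVerts (X : WSC V d) (α : Finset V) : Finset V :=
  Finset.univ.filter (fun x => x ∉ α ∧ insert x α ∈ X.faces)

/-- The link distribution `Π^α_l(τ) = Π_{j+1+l}(α ∪ τ) / (C(|α ∪ τ|, |α|) · Π_j(α))`
for a face `α` of dimension `j` and `τ ∈ X_α(l)`. -/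
noncomputable def linkPi (X : WSC V d) (α τ : Finset V) : ℝ :=
  X.W (α ∪ τ).card (α ∪ τ) / ((Nat.choose (α ∪ τ).card α.card : ℝ) * X.W α.card α)

/-- The random walk matrix `M_α` of the graph of the link `X_α`, with entries
`M_α(x, y) = Π^α_1({x, y}) / (2 Π^α_0(x))` for `{x, y} ∈ X_α(1)` and `0` otherwise,
viewed as an operator on functions on the vertices of the link. -/
noncomputable def linkWalk (X : WSC V d) (α : Finset V) (f : V → ℝ) : V → ℝ :=
  fun x => ∑ y ∈ (X.linkVerts α).filter
      (fun y => y ≠ x ∧ insert y (insert x α) ∈ X.faces),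
    (X.linkPi α {x, y} / (2 * X.linkPi α {x})) * f y

/-- The projector `J_α` onto the constant functions on the link: `J_α g` is the
constant function with value `E_{x ∼ Π^α_0}[g(x)]`. -/
noncomputable def linkJ (X : WSC V d) (α : Finset V) (g : V → ℝ) : V → ℝ :=
  fun _ => ∑ x ∈ X.linkVerts α, X.linkPi α {x} * g x

/-- The inner product `⟨g, h⟩_{Π^α_0}` on functions on the vertices of the link. -/
noncomputable def linkInner (X : WSC V d) (α : Finset V) (g h : V → ℝ) : ℝ :=
  ∑ x ∈ X.linkVerts α, X.linkPi α {x} * g x * h x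

/-- The second largest eigenvalue `λ₂(M_α)` of the random walk matrix of the graph
of the link `X_α`, via the variational principle. -/
noncomputable def linkLam2 (X : WSC V d) (α : Finset V) : ℝ :=
  sSup { r : ℝ | ∃ f : V → ℝ,
    X.linkInner α f (fun _ => 1) = 0 ∧ X.linkInner α f f ≠ 0 ∧
    r = X.linkInner α f (X.linkWalk α f) / X.linkInner α f f }

/-- `X.gammaC m` is `γ_{m-1} = max_{α ∈ X(m-1)} λ₂(M_α)`, the maximum over faces `α`
of cardinality `m` (dimension `m - 1`) of the second eigenvalue of the link walk. -/
noncomputable def gammaC (X : WSC V d) (m : ℕ) : ℝ :=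
  sSup { r : ℝ | ∃ α ∈ X.faces, α.card = m ∧ r = X.linkLam2 α }

end WSC

/-!
Writing `P∧_m = D U` and `P∨_{m+1} = U D` with `U` adjoint to `D`, the two walks have the same
second eigenvalue.  The non-lazy part of `P∧_m` is the average over `σ ∈ X(m-1)` of the link
walks `M_σ` applied to the restrictions `f_σ = f(σ ∪ ·)`, whose means are the values `(D f)(σ)`;
bounding the mean-zero part of each `f_σ` by `λ₂(M_σ) ≤ γ_{m-1}` (Garland's method) gives
`λ₂(P∧_m) ≤ (1 + (m+1) (γ_{m-1} + (1 - γ_{m-1}) λ₂(P∨_m))) / (m+2)`.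
The same localization, tested on an eigenfunction of `M_α`, shows `λ₂(M_α) ≤ c/(1-c)` when all
links of the faces `α ∪ {x}` have `λ₂ ≤ c` and `λ₂(M_α) < 1` (Oppenheim's trickling down).
Starting from `γ_{k-2} ≤ 1/(k+1)` this gives `γ_j ≤ 1/(j+3)` for all `j ≤ k-2`, and the
recursion then yields `λ₂(P∨_m) ≤ 1 - 1/(m+1)²` for `m ≤ k` by induction.
-/

section WeightedInner

variable {ι : Type*} (s : Finset ι) (w : ι → ℝ)

def wInner (f g : ι → ℝ) : ℝ := ∑ i ∈ s, w i * f i * g i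

def rayleighQuotients (M : (ι → ℝ) → ι → ℝ) : Set ℝ :=
  { r | ∃ f : ι → ℝ, wInner s w f (fun _ => 1) = 0 ∧ wInner s w f f ≠ 0 ∧
    r = wInner s w f (M f) / wInner s w f f }

noncomputable def rayleighSup (M : (ι → ℝ) → ι → ℝ) : ℝ := sSup (rayleighQuotients s w M)

variable {s w}

theorem wInner_comm (f g : ι → ℝ) : wInner s w f g = wInner s w g f :=
  sum_congr rfl fun _ _ => by ring

theorem wInner_self_nonneg (hw : ∀ i ∈ s, 0 ≤ w i) (f : ι → ℝ) : 0 ≤ wInner s w f f :=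
  sum_nonneg fun i hi => by rw [mul_assoc]; exact mul_nonneg (hw i hi) (mul_self_nonneg (f i))

theorem wInner_self_eq_zero (hw : ∀ i ∈ s, 0 < w i) {f : ι → ℝ} (hf : wInner s w f f = 0) :
    ∀ i ∈ s, f i = 0 := fun i hi => by
  have := (sum_eq_zero_iff_of_nonneg fun j hj => by
    rw [mul_assoc]; exact mul_nonneg (hw j hj).le (mul_self_nonneg (f j))).1 hf i hi
  rw [mul_assoc, mul_eq_zero, mul_self_eq_zero] at this
  exact this.resolve_left (hw i hi).ne'

theorem sq_wInner_le (hw : ∀ i ∈ s, 0 ≤ w i) (f g : ι → ℝ) :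
    wInner s w f g ^ 2 ≤ wInner s w f f * wInner s w g g :=
  sum_sq_le_sum_mul_sum_of_sq_le_mul s
    (fun i hi => by rw [mul_assoc]; exact mul_nonneg (hw i hi) (mul_self_nonneg (f i)))
    (fun i hi => by rw [mul_assoc]; exact mul_nonneg (hw i hi) (mul_self_nonneg (g i)))
    (fun i _ => le_of_eq (by ring))

theorem rayleighSup_le {M : (ι → ℝ) → ι → ℝ} {B : ℝ} (hw : ∀ i ∈ s, 0 ≤ w i) (hB : 0 ≤ B)
    (h : ∀ f, wInner s w f (fun _ => 1) = 0 → wInner s w f f ≠ 0 →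
      wInner s w f (M f) ≤ B * wInner s w f f) :
    rayleighSup s w M ≤ B := by
  refine Real.sSup_le ?_ hB
  rintro r ⟨f, h1, h2, rfl⟩
  rw [div_le_iff₀ ((wInner_self_nonneg hw f).lt_of_ne' h2)]
  exact h f h1 h2

theorem rayleighSup_nonneg {M : (ι → ℝ) → ι → ℝ} (hw : ∀ i ∈ s, 0 ≤ w i)
    (h : ∀ f, 0 ≤ wInner s w f (M f)) : 0 ≤ rayleighSup s w M :=
  Real.sSup_nonneg <| by
    rintro r ⟨f, -, -, rfl⟩
    exact div_nonneg (h f) (wInner_self_nonneg hw f)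

theorem bddAbove_rayleighQuotients {M : (ι → ℝ) → ι → ℝ} (hw : ∀ i ∈ s, 0 ≤ w i)
    (h : ∀ f, wInner s w f (M f) ≤ wInner s w f f) : BddAbove (rayleighQuotients s w M) := by
  refine ⟨1, ?_⟩
  rintro r ⟨f, -, h2, rfl⟩
  rw [div_le_one ((wInner_self_nonneg hw f).lt_of_ne' h2)]
  exact h f

theorem wInner_le_rayleighSup_mul {M : (ι → ℝ) → ι → ℝ} (hw : ∀ i ∈ s, 0 ≤ w i)
    (hM : BddAbove (rayleighQuotients s w M)) {f : ι → ℝ}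
    (h1 : wInner s w f (fun _ => 1) = 0) (h2 : wInner s w f f ≠ 0) :
    wInner s w f (M f) ≤ rayleighSup s w M * wInner s w f f := by
  rw [← div_le_iff₀ ((wInner_self_nonneg hw f).lt_of_ne' h2)]
  exact le_csSup hM ⟨f, h1, h2, rfl⟩

theorem wInner_add_const (hw : ∑ i ∈ s, w i = 1) (f g : ι → ℝ) (c : ℝ)
    (hf : ∑ i ∈ s, w i * f i = 0) (hg : ∑ i ∈ s, w i * g i = 0) :
    wInner s w (fun i => f i + c) (fun i => g i + c) = wInner s w f g + c ^ 2 := by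
  have : ∀ i ∈ s, w i * (f i + c) * (g i + c)
      = w i * f i * g i + c * (w i * f i) + c * (w i * g i) + c ^ 2 * w i :=
    fun i _ => by ring
  rw [wInner, sum_congr rfl this]
  simp only [sum_add_distrib, ← mul_sum, hf, hg, hw, wInner]
  ring

section Adjoint

variable {ι' : Type*} {t : Finset ι'} {v : ι' → ℝ} {A : (ι → ℝ) → ι' → ℝ}
  {B : (ι' → ℝ) → ι → ℝ}

theorem wInner_self_le_of_adjoint (hw : ∀ i ∈ s, 0 ≤ w i) (hv : ∀ i ∈ t, 0 ≤ v i)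
    (hAB : ∀ f g, wInner t v (A f) g = wInner s w f (B g))
    (hA : ∀ f, wInner t v (A f) (A f) ≤ wInner s w f f) (g : ι' → ℝ) :
    wInner s w (B g) (B g) ≤ wInner t v g g := by
  set b := wInner s w (B g) (B g)
  have hb := wInner_self_nonneg hw (B g)
  have hg := wInner_self_nonneg hv g
  have : b ^ 2 ≤ b * wInner t v g g :=
    calc b ^ 2 = wInner t v (A (B g)) g ^ 2 := by rw [hAB]
      _ ≤ wInner t v (A (B g)) (A (B g)) * wInner t v g g := sq_wInner_le hv _ _
      _ ≤ b * wInner t v g g := by gcongr; exact hA _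
  nlinarith

theorem rayleighSup_comp_le (hw : ∀ i ∈ s, 0 ≤ w i) (hv : ∀ i ∈ t, 0 ≤ v i)
    (hAB : ∀ f g, wInner t v (A f) g = wInner s w f (B g))
    (hB1 : ∀ i ∈ s, B (fun _ => 1) i = 1)
    (hB : ∀ g, wInner s w (B g) (B g) ≤ wInner t v g g) :
    rayleighSup s w (fun f => B (A f)) ≤ rayleighSup t v (fun g => A (B g)) := by
  have hquot : ∀ g, wInner t v g (A (B g)) = wInner s w (B g) (B g) := fun g => by
    rw [wInner_comm, hAB]
  have hbdd : BddAbove (rayleighQuotients t v fun g => A (B g)) :=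
    bddAbove_rayleighQuotients hv fun g => (hquot g).trans_le (hB g)
  set μ := rayleighSup t v fun g => A (B g)
  have hμ : 0 ≤ μ := rayleighSup_nonneg hv fun g => (hquot g).symm ▸ wInner_self_nonneg hw (B g)
  refine rayleighSup_le hw hμ fun f h1 h2 => ?_
  set g := A f
  have hg1 : wInner t v g (fun _ => 1) = 0 := by
    rw [hAB, ← h1]; exact sum_congr rfl fun i hi => by rw [hB1 i hi]
  have hfB : wInner s w f (B g) = wInner t v g g := by rw [← hAB]
  have hf := (wInner_self_nonneg hw f).lt_of_ne' h2
  rw [hfB]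
  rcases (wInner_self_nonneg hv g).eq_or_lt' with hg0 | hg0
  · rw [hg0]; positivity
  -- `‖A f‖⁴ = ⟨f, B (A f)⟩² ≤ ‖f‖² ⟨A f, A B (A f)⟩ ≤ ‖f‖² μ ‖A f‖²`
  have : wInner t v g g ^ 2 ≤ wInner s w f f * (μ * wInner t v g g) :=
    calc wInner t v g g ^ 2 ≤ wInner s w f f * wInner s w (B g) (B g) := by
          rw [← hfB]; exact sq_wInner_le hw _ _
      _ ≤ wInner s w f f * (μ * wInner t v g g) := by
          rw [← hquot]
          gcongr
          exact wInner_le_rayleighSup_mul hv hbdd hg1 hg0.ne'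
  nlinarith

end Adjoint

end WeightedInner

section ReversibleChain

variable {ι : Type*} (s : Finset ι) (w : ι → ℝ) (κ : ι → ι → ℝ)

def kernelOp (g : ι → ℝ) (i : ι) : ℝ := ∑ j ∈ s, κ i j * g j

structure IsReversibleChain : Prop where
  weight_pos : ∀ i ∈ s, 0 < w i
  sum_weight : ∑ i ∈ s, w i = 1
  kernel_nonneg : ∀ i ∈ s, ∀ j ∈ s, 0 ≤ κ i j
  sum_kernel : ∀ i ∈ s, ∑ j ∈ s, κ i j = 1
  reversible : ∀ i ∈ s, ∀ j ∈ s, w i * κ i j = w j * κ j i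

variable {s w κ}

theorem kernelOp_add_const {i : ι} (hi : ∑ j ∈ s, κ i j = 1) (g : ι → ℝ) (c : ℝ) :
    kernelOp s κ (fun j => g j + c) i = kernelOp s κ g i + c := by
  simp only [kernelOp, mul_add, sum_add_distrib, ← sum_mul, hi, one_mul]

namespace IsReversibleChain

theorem weight_nonneg (h : IsReversibleChain s w κ) : ∀ i ∈ s, 0 ≤ w i :=
  fun i hi => (h.weight_pos i hi).le

theorem sum_mul_kernelOp (h : IsReversibleChain s w κ) (g : ι → ℝ) :
    ∑ i ∈ s, w i * kernelOp s κ g i = ∑ i ∈ s, w i * g i := by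
  simp only [kernelOp, mul_sum]
  rw [sum_comm]
  refine sum_congr rfl fun j hj => ?_
  calc ∑ i ∈ s, w i * (κ i j * g j) = ∑ i ∈ s, w j * κ j i * g j :=
        sum_congr rfl fun i hi => by rw [← h.reversible i hi j hj]; ring
    _ = w j * g j := by rw [← sum_mul, ← mul_sum, h.sum_kernel j hj, mul_one]

theorem wInner_kernelOp_le (h : IsReversibleChain s w κ) (g : ι → ℝ) :
    wInner s w g (kernelOp s κ g) ≤ wInner s w g g := by
  have hleft : ∑ i ∈ s, ∑ j ∈ s, w i * κ i j * g i ^ 2 = ∑ i ∈ s, w i * g i ^ 2 :=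
    sum_congr rfl fun i hi => by rw [← sum_mul, ← mul_sum, h.sum_kernel i hi, mul_one]
  have hright : ∑ i ∈ s, ∑ j ∈ s, w i * κ i j * g j ^ 2 = ∑ i ∈ s, w i * g i ^ 2 := by
    rw [← h.sum_mul_kernelOp]
    exact sum_congr rfl fun i _ => by rw [kernelOp, mul_sum]; simp only [mul_assoc]
  calc wInner s w g (kernelOp s κ g) = ∑ i ∈ s, ∑ j ∈ s, w i * κ i j * (g i * g j) := by
        simp only [wInner, kernelOp, mul_sum]
        exact sum_congr rfl fun i _ => sum_congr rfl fun j _ => by ring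
    _ ≤ ∑ i ∈ s, ∑ j ∈ s, w i * κ i j * ((g i ^ 2 + g j ^ 2) / 2) := by
        gcongr with i hi j hj
        · exact mul_nonneg (h.weight_nonneg i hi) (h.kernel_nonneg i hi j hj)
        · nlinarith [sq_nonneg (g i - g j)]
    _ = wInner s w g g := by
        simp only [mul_add, add_div, sum_add_distrib, mul_div_assoc', ← sum_div, hleft, hright]
        rw [wInner, ← add_div, ← two_mul, mul_div_cancel_left₀ _ two_ne_zero]
        exact sum_congr rfl fun i _ => by ring

theorem wInner_kernelOp_le_of_rayleighSup_le (h : IsReversibleChain s w κ) {b : ℝ}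
    (hb : rayleighSup s w (kernelOp s κ) ≤ b) (g : ι → ℝ) :
    wInner s w g (kernelOp s κ g)
      ≤ b * (wInner s w g g - (∑ i ∈ s, w i * g i) ^ 2) + (∑ i ∈ s, w i * g i) ^ 2 := by
  set e := ∑ i ∈ s, w i * g i
  set g₀ : ι → ℝ := fun i => g i - e
  have hg : g = fun i => g₀ i + e := by funext i; simp [g₀]
  have hg₀ : ∑ i ∈ s, w i * g₀ i = 0 := by
    simp only [g₀, mul_sub, sum_sub_distrib, ← sum_mul, h.sum_weight, one_mul]
    exact sub_self e
  have hKg₀ : ∑ i ∈ s, w i * kernelOp s κ g₀ i = 0 := (h.sum_mul_kernelOp g₀).trans hg₀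
  have hKg : wInner s w g (kernelOp s κ g)
      = wInner s w (fun i => g₀ i + e) (fun i => kernelOp s κ g₀ i + e) := by
    rw [hg]
    exact sum_congr rfl fun i hi => by rw [kernelOp_add_const (h.sum_kernel i hi) g₀ e]
  have hquot : wInner s w g₀ (kernelOp s κ g₀) ≤ b * wInner s w g₀ g₀ := by
    rcases (wInner_self_nonneg h.weight_nonneg g₀).eq_or_lt' with h0 | hpos
    · have hz := wInner_self_eq_zero h.weight_pos h0
      rw [h0, mul_zero]
      exact (sum_eq_zero fun i hi => by rw [hz i hi, mul_zero, zero_mul]).le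
    · have h1 : wInner s w g₀ (fun _ => 1) = 0 := by simpa [wInner] using hg₀
      calc wInner s w g₀ (kernelOp s κ g₀)
          ≤ rayleighSup s w (kernelOp s κ) * wInner s w g₀ g₀ :=
            wInner_le_rayleighSup_mul h.weight_nonneg
              (bddAbove_rayleighQuotients h.weight_nonneg h.wInner_kernelOp_le) h1 hpos.ne'
        _ ≤ b * wInner s w g₀ g₀ := by gcongr
  rw [hKg, wInner_add_const h.sum_weight _ _ _ hg₀ hKg₀, hg,
    wInner_add_const h.sum_weight _ _ _ hg₀ hg₀]
  linarith

end IsReversibleChain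

end ReversibleChain

namespace LinearMap.IsSymmetric

variable {E : Type*} [NormedAddCommGroup E] [InnerProductSpace ℝ E] [FiniteDimensional ℝ E]
  {T : E →ₗ[ℝ] E}

theorem exists_eigenvector_sSup_orthogonal (hT : T.IsSymmetric) {u : E} {c : ℝ}
    (hu : T u = c • u) (hne : ∃ v, inner ℝ u v = 0 ∧ v ≠ 0) :
    ∃ v, inner ℝ u v = 0 ∧ v ≠ 0 ∧ T v =
      sSup {r | ∃ x, inner ℝ u x = 0 ∧ x ≠ 0 ∧ r = inner ℝ (T x) x / ‖x‖ ^ 2} • v := by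
  set K := (ℝ ∙ u)ᗮ
  have hK : ∀ v, v ∈ K ↔ inner ℝ u v = 0 := fun v =>
    Submodule.mem_orthogonal_singleton_iff_inner_right
  have hTK : ∀ v ∈ K, T v ∈ K := fun v hv => by
    rw [hK] at hv ⊢
    rw [← hT, hu, inner_smul_left, hv, mul_zero]
  obtain ⟨v₀, hv₀u, hv₀⟩ := hne
  have : Nontrivial K := ⟨⟨⟨v₀, (hK v₀).2 hv₀u⟩, 0, fun h => hv₀ (congrArg Subtype.val h)⟩⟩
  have heig := (hT.restrict_invariant hTK).hasEigenvalue_iSup_of_finiteDimensional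
  have hsup : (⨆ x : { x : K // x ≠ 0 },
      RCLike.re (inner ℝ (T.restrict hTK x) x) / ‖(x : K)‖ ^ 2)
      = sSup {r | ∃ x, inner ℝ u x = 0 ∧ x ≠ 0 ∧ r = inner ℝ (T x) x / ‖x‖ ^ 2} := by
    refine congrArg sSup (Set.ext fun r => ⟨?_, ?_⟩)
    · rintro ⟨⟨x, hx⟩, rfl⟩
      exact ⟨x, (hK x).1 x.2, fun h => hx (Subtype.ext h), rfl⟩
    · rintro ⟨x, hxu, hx, rfl⟩
      exact ⟨⟨⟨x, (hK x).2 hxu⟩, fun h => hx (congrArg Subtype.val h)⟩, rfl⟩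
  rw [hsup] at heig
  obtain ⟨v, hv, hv0⟩ := heig.exists_hasEigenvector
  exact ⟨v, (hK v).1 v.2, fun h => hv0 (Subtype.ext h),
    congrArg Subtype.val (Module.End.mem_eigenspace_iff.1 hv)⟩

end LinearMap.IsSymmetric

section Symmetrization

variable {ι : Type*} {s : Finset ι} {w : ι → ℝ} {κ : ι → ι → ℝ}

/- `sqrtWeighted s w` is an isometry from `(ι → ℝ, wInner s w)` onto `EuclideanSpace ℝ s`
(modulo functions vanishing on `s`) that conjugates `kernelOp s κ` to `symmetrizedKernel s w κ`,
a symmetric matrix when the chain is reversible. -/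
variable (s w) in
noncomputable def sqrtWeighted (g : ι → ℝ) : EuclideanSpace ℝ s :=
  WithLp.toLp 2 fun i => √(w i) * g i

variable (s w κ) in
noncomputable def symmetrizedKernel : Matrix s s ℝ := fun i j => √(w i) * κ i j / √(w j)

theorem inner_sqrtWeighted (hw : ∀ i ∈ s, 0 ≤ w i) (f g : ι → ℝ) :
    inner ℝ (sqrtWeighted s w f) (sqrtWeighted s w g) = wInner s w f g := by
  rw [sqrtWeighted, sqrtWeighted, EuclideanSpace.inner_toLp_toLp, dotProduct, wInner,
    ← sum_coe_sort s]
  refine sum_congr rfl fun i _ => ?_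
  simp only [star_trivial]
  linear_combination (f i * g i) * Real.mul_self_sqrt (hw i i.2)

theorem sqrtWeighted_surjective [DecidableEq ι] (hw : ∀ i ∈ s, 0 < w i) :
    Function.Surjective (sqrtWeighted s w) := fun v => by
  refine ⟨fun i => if hi : i ∈ s then v ⟨i, hi⟩ / √(w i) else 0, ?_⟩
  ext i
  have := Real.sqrt_pos.2 (hw i i.2)
  simp only [sqrtWeighted, SetLike.coe_mem, ↓reduceDIte, SetLike.eta]
  field_simp

theorem sqrtWeighted_congr {f g : ι → ℝ} (h : ∀ i ∈ s, f i = g i) :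
    sqrtWeighted s w f = sqrtWeighted s w g := by
  ext i
  simp [sqrtWeighted, h i i.2]

theorem toEuclideanLin_symmetrizedKernel [DecidableEq ι] (hw : ∀ i ∈ s, 0 < w i)
    (g : ι → ℝ) :
    Matrix.toEuclideanLin (symmetrizedKernel s w κ) (sqrtWeighted s w g)
      = sqrtWeighted s w (kernelOp s κ g) := by
  ext i
  simp only [sqrtWeighted, Matrix.toLpLin_toLp, Matrix.toLin'_apply, Matrix.mulVec,
    dotProduct, symmetrizedKernel, kernelOp, mul_sum, ← sum_coe_sort s]
  refine sum_congr rfl fun j _ => ?_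
  have := Real.sqrt_pos.2 (hw j j.2)
  field_simp

theorem IsReversibleChain.isHermitian_symmetrizedKernel (h : IsReversibleChain s w κ) :
    (symmetrizedKernel s w κ).IsHermitian := by
  refine Matrix.IsHermitian.ext fun i j => ?_
  have hi := Real.sqrt_pos.2 (h.weight_pos i i.2)
  have hj := Real.sqrt_pos.2 (h.weight_pos j j.2)
  simp only [symmetrizedKernel, star_trivial]
  rw [div_eq_div_iff hi.ne' hj.ne']
  linear_combination h.reversible j j.2 i i.2 + κ j i * Real.sq_sqrt (h.weight_nonneg j j.2)
    - κ i j * Real.sq_sqrt (h.weight_nonneg i i.2)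

theorem sqrtWeighted_ne_zero_iff (hw : ∀ i ∈ s, 0 ≤ w i) (g : ι → ℝ) :
    sqrtWeighted s w g ≠ 0 ↔ wInner s w g g ≠ 0 := by
  rw [← inner_sqrtWeighted hw, Ne, Ne, inner_self_eq_zero]

theorem IsReversibleChain.rayleighQuotients_eq [DecidableEq ι] (h : IsReversibleChain s w κ) :
    rayleighQuotients s w (kernelOp s κ) = {r | ∃ x, inner ℝ (sqrtWeighted s w fun _ => 1) x = 0
      ∧ x ≠ 0 ∧ r = inner ℝ (Matrix.toEuclideanLin (symmetrizedKernel s w κ) x) x / ‖x‖ ^ 2} := by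
  have hΦ := inner_sqrtWeighted h.weight_nonneg
  ext r
  constructor
  · rintro ⟨f, h1, h2, rfl⟩
    refine ⟨sqrtWeighted s w f, by rw [hΦ, wInner_comm, h1],
      (sqrtWeighted_ne_zero_iff h.weight_nonneg f).2 h2, ?_⟩
    rw [toEuclideanLin_symmetrizedKernel h.weight_pos, ← real_inner_self_eq_norm_sq, hΦ, hΦ,
      wInner_comm]
  · rintro ⟨x, h1, h2, rfl⟩
    obtain ⟨f, rfl⟩ := sqrtWeighted_surjective h.weight_pos x
    refine ⟨f, by rw [wInner_comm, ← hΦ, h1], (sqrtWeighted_ne_zero_iff h.weight_nonneg f).1 h2, ?_⟩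
    rw [toEuclideanLin_symmetrizedKernel h.weight_pos, ← real_inner_self_eq_norm_sq, hΦ, hΦ,
      wInner_comm]

theorem IsReversibleChain.exists_eigenfunction [DecidableEq ι] (h : IsReversibleChain s w κ)
    (hne : (rayleighQuotients s w (kernelOp s κ)).Nonempty) :
    ∃ g : ι → ℝ, wInner s w g (fun _ => 1) = 0 ∧ wInner s w g g ≠ 0 ∧
      ∀ i ∈ s, kernelOp s κ g i = rayleighSup s w (kernelOp s κ) * g i := by
  have hTΦ := toEuclideanLin_symmetrizedKernel (κ := κ) h.weight_pos
  have hu : Matrix.toEuclideanLin (symmetrizedKernel s w κ) (sqrtWeighted s w fun _ => 1)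
      = (1 : ℝ) • sqrtWeighted s w fun _ => 1 := by
    rw [hTΦ, one_smul]
    exact sqrtWeighted_congr fun i hi => by simp [kernelOp, h.sum_kernel i hi]
  obtain ⟨v, hv1, hv0, hTv⟩ := (Matrix.isSymmetric_toEuclideanLin_iff.2
    h.isHermitian_symmetrizedKernel).exists_eigenvector_sSup_orthogonal hu (by
      obtain ⟨r, hr⟩ := hne
      rw [h.rayleighQuotients_eq] at hr
      obtain ⟨x, hx1, hx0, -⟩ := hr
      exact ⟨x, hx1, hx0⟩)
  rw [← h.rayleighQuotients_eq] at hTv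
  obtain ⟨g, rfl⟩ := sqrtWeighted_surjective h.weight_pos v
  refine ⟨g, by rw [wInner_comm, ← inner_sqrtWeighted h.weight_nonneg, hv1],
    (sqrtWeighted_ne_zero_iff h.weight_nonneg g).1 hv0, fun i hi => ?_⟩
  have := congrArg (fun x : EuclideanSpace ℝ s => x ⟨i, hi⟩) ((hTΦ g).symm.trans hTv)
  simp only [sqrtWeighted, PiLp.smul_apply, smul_eq_mul] at this
  exact mul_left_cancel₀ (Real.sqrt_pos.2 (h.weight_pos i hi)).ne'
    (this.trans (mul_left_comm _ _ _))

end Symmetrization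

namespace WSC

theorem upOp_const {V : Type*} [DecidableEq V] {β : Finset V} (hβ : β.Nonempty) (c : ℝ) :
    upOp (fun _ => c) β = c := by
  have := card_pos.2 hβ
  rw [upOp, sum_const, nsmul_eq_mul]
  field_simp

theorem upOp_insert {V : Type*} [DecidableEq V] {β : Finset V} {y : V} (hy : y ∉ β)
    (f : Finset V → ℝ) :
    upOp f (insert y β) = (f β + ∑ z ∈ β, f (insert y (β.erase z))) / (β.card + 1) := by
  have h : ∀ z ∈ β, f ((insert y β).erase z) = f (insert y (β.erase z)) := fun z hz => by
    rw [erase_insert_of_ne (fun h : y = z => hy (h ▸ hz))]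
  rw [upOp, sum_insert hy, erase_insert hy, card_insert_of_notMem hy, sum_congr rfl h]
  push_cast
  ring

variable {V : Type*} [DecidableEq V] [Fintype V] {d : ℕ} (X : WSC V d)

theorem linkLam2_eq_rayleighSup (α : Finset V) :
    X.linkLam2 α = rayleighSup (X.linkVerts α) (fun x => X.linkPi α {x}) (X.linkWalk α) := rfl

theorem inn_comm (m : ℕ) (f g : Finset V → ℝ) : X.inn m f g = X.inn m g f := wInner_comm f g

theorem weight_nonneg (β : Finset V) : 0 ≤ X.weight β := by
  by_cases h : β ∈ X.faces ∧ β.card = d + 1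
  · exact (X.weight_pos β h.1 h.2).le
  · rw [X.weight_zero β (by tauto)]

theorem Waux_nonneg (t : ℕ) (β : Finset V) : 0 ≤ X.Waux t β := by
  induction t generalizing β with
  | zero => exact X.weight_nonneg β
  | succ t ih => exact mul_nonneg (by positivity) (sum_nonneg fun β' _ => ih β')

theorem W_nonneg (m : ℕ) (β : Finset V) : 0 ≤ X.W m β := X.Waux_nonneg _ β

theorem Waux_pos {t : ℕ} (ht : t ≤ d + 1) {α : Finset V} (hα : α ∈ X.faces)
    (hc : α.card = d + 1 - t) : 0 < X.Waux t α := by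
  induction t generalizing α with
  | zero => exact X.weight_pos α hα (by omega)
  | succ t ih =>
    refine mul_pos (by simp only [one_div, inv_pos, Nat.cast_pos]; omega)
      (sum_pos' (fun β _ => X.Waux_nonneg t β) ?_)
    obtain ⟨τ, hτ, hατ, hτc⟩ := X.pure α hα
    obtain ⟨β, hαβ, hβτ, hβc⟩ :=
      exists_subsuperset_card_eq hατ (n := α.card + 1) (by omega) (by omega)
    have hβ := X.down_closed τ hτ β hβτ
    exact ⟨β, mem_filter.2 ⟨hβ, hαβ, by omega⟩, ih (by omega) hβ (by omega)⟩

theorem W_pos {α : Finset V} (hα : α ∈ X.faces) : 0 < X.W α.card α := by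
  have := X.dim_le α hα
  exact X.Waux_pos (by omega) hα (by omega)

theorem W_succ {m : ℕ} (hm : m ≤ d) (α : Finset V) :
    X.W m α = (1 / ((m + 1 : ℕ) : ℝ)) *
      ∑ β ∈ X.faces.filter (fun β => α ⊆ β ∧ β.card = m + 1), X.W (m + 1) β := by
  rw [W, W, show d + 1 - m = (d - m) + 1 by omega, show d + 1 - (m + 1) = d - m by omega, Waux,
    show d + 1 - (d - m) = m + 1 by omega]

theorem mem_linkVerts {α : Finset V} {x : V} :
    x ∈ X.linkVerts α ↔ x ∉ α ∧ insert x α ∈ X.faces := by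
  simp [linkVerts]

theorem mem_faces_of_mem_linkVerts {α : Finset V} {x : V} (hx : x ∈ X.linkVerts α) :
    α ∈ X.faces :=
  X.down_closed _ ((X.mem_linkVerts).1 hx).2 α (subset_insert x α)

theorem sum_cofaces_eq_sum_linkVerts (α : Finset V) (F : Finset V → ℝ) :
    ∑ β ∈ X.faces.filter (fun β => α ⊆ β ∧ β.card = α.card + 1), F β
      = ∑ x ∈ X.linkVerts α, F (insert x α) := by
  have himage : X.faces.filter (fun β => α ⊆ β ∧ β.card = α.card + 1)
      = (X.linkVerts α).image (insert · α) := by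
    ext β
    simp only [mem_filter, mem_image, X.mem_linkVerts]
    constructor
    · rintro ⟨hβ, hαβ, hβc⟩
      obtain ⟨x, hx⟩ := card_eq_one.1 (show (β \ α).card = 1 by
        rw [card_sdiff_of_subset hαβ]; omega)
      have hxβ : x ∈ β \ α := hx ▸ mem_singleton_self x
      have hβx : β = insert x α := (eq_of_subset_of_card_le
        (insert_subset (mem_sdiff.1 hxβ).1 hαβ)
        (by rw [card_insert_of_notMem (mem_sdiff.1 hxβ).2]; omega)).symm
      exact ⟨x, ⟨(mem_sdiff.1 hxβ).2, hβx ▸ hβ⟩, hβx.symm⟩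
    · rintro ⟨x, ⟨hxα, hx⟩, rfl⟩
      exact ⟨hx, subset_insert _ _, card_insert_of_notMem hxα⟩
  rw [himage, sum_image]
  intro x hx y _ hxy
  have : x ∈ insert y α := (show insert x α = insert y α from hxy) ▸ mem_insert_self x α
  exact (mem_insert.1 this).resolve_right ((X.mem_linkVerts).1 hx).1

theorem sum_card_succ_sum_erase (m : ℕ) (G : Finset V → V → ℝ) :
    ∑ β ∈ X.faces.filter (·.card = m + 1), ∑ x ∈ β, G (β.erase x) x
      = ∑ σ ∈ X.faces.filter (·.card = m), ∑ x ∈ X.linkVerts σ, G σ x := by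
  rw [sum_sigma', sum_sigma']
  refine sum_nbij' (fun p => ⟨p.1.erase p.2, p.2⟩) (fun p => ⟨insert p.2 p.1, p.2⟩)
    ?_ ?_ ?_ ?_ fun _ _ => rfl
  · rintro ⟨β, x⟩ hp
    simp only [mem_sigma, mem_filter] at hp ⊢
    refine ⟨⟨X.down_closed β hp.1.1 _ (erase_subset _ _), ?_⟩, (X.mem_linkVerts).2
      ⟨notMem_erase _ _, by rw [insert_erase hp.2]; exact hp.1.1⟩⟩
    rw [card_erase_of_mem hp.2, hp.1.2]; rfl
  · rintro ⟨σ, x⟩ hp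
    simp only [mem_sigma, mem_filter, X.mem_linkVerts] at hp ⊢
    exact ⟨⟨hp.2.2, by rw [card_insert_of_notMem hp.2.1, hp.1.2]⟩, mem_insert_self _ _⟩
  · rintro ⟨β, x⟩ hp
    simp only [mem_sigma] at hp
    simp [insert_erase hp.2]
  · rintro ⟨σ, x⟩ hp
    simp only [mem_sigma, X.mem_linkVerts] at hp
    simp [erase_insert hp.2.1]

theorem linkPi_nonneg (α τ : Finset V) : 0 ≤ X.linkPi α τ :=
  div_nonneg (X.W_nonneg _ _) (mul_nonneg (Nat.cast_nonneg _) (X.W_nonneg _ _))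

theorem linkPi_singleton {α : Finset V} {x : V} (hx : x ∉ α) :
    X.linkPi α {x} = X.W (α.card + 1) (insert x α) / ((α.card + 1) * X.W α.card α) := by
  rw [linkPi, union_comm, ← insert_eq, card_insert_of_notMem hx, Nat.choose_succ_self_right]
  push_cast
  ring

theorem W_insert {α : Finset V} (hα : α ∈ X.faces) {x : V} (hx : x ∉ α) :
    X.W (α.card + 1) (insert x α) = (α.card + 1) * X.W α.card α * X.linkPi α {x} := by
  have := X.W_pos hα
  rw [X.linkPi_singleton hx]
  field_simp

theorem linkPi_singleton_pos {α : Finset V} {x : V} (hx : x ∈ X.linkVerts α) :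
    0 < X.linkPi α {x} := by
  have hα := X.W_pos (X.mem_faces_of_mem_linkVerts hx)
  rw [X.mem_linkVerts] at hx
  have hαx := X.W_pos hx.2
  rw [card_insert_of_notMem hx.1] at hαx
  rw [X.linkPi_singleton hx.1]
  positivity

theorem sum_W_insert {α : Finset V} (hαd : α.card ≤ d) :
    ∑ x ∈ X.linkVerts α, X.W (α.card + 1) (insert x α) = (α.card + 1) * X.W α.card α := by
  rw [← X.sum_cofaces_eq_sum_linkVerts α (X.W (α.card + 1)), X.W_succ hαd α]
  push_cast
  field_simp

theorem sum_linkPi_singleton {α : Finset V} (hα : α ∈ X.faces) (hαd : α.card ≤ d) :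
    ∑ x ∈ X.linkVerts α, X.linkPi α {x} = 1 := by
  have := X.W_pos hα
  rw [sum_congr rfl fun x hx => X.linkPi_singleton ((X.mem_linkVerts).1 hx).1, ← sum_div,
    X.sum_W_insert hαd]
  field_simp

theorem sum_W_mul_sum_erase (m : ℕ) (G : Finset V → Finset V → ℝ) :
    ∑ β ∈ X.faces.filter (·.card = m + 1), X.W (m + 1) β * ∑ x ∈ β, G (β.erase x) β
      = (m + 1) * ∑ σ ∈ X.faces.filter (·.card = m),
          X.W m σ * ∑ x ∈ X.linkVerts σ, X.linkPi σ {x} * G σ (insert x σ) := by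
  calc _ = ∑ β ∈ X.faces.filter (·.card = m + 1), ∑ x ∈ β,
        X.W (m + 1) (insert x (β.erase x)) * G (β.erase x) (insert x (β.erase x)) :=
        sum_congr rfl fun β _ => by
          rw [mul_sum]; exact sum_congr rfl fun x hx => by rw [insert_erase hx]
    _ = ∑ σ ∈ X.faces.filter (·.card = m), ∑ x ∈ X.linkVerts σ,
        X.W (m + 1) (insert x σ) * G σ (insert x σ) :=
        X.sum_card_succ_sum_erase m fun σ x => X.W (m + 1) (insert x σ) * G σ (insert x σ)
    _ = _ := by
        rw [mul_sum]
        refine sum_congr rfl fun σ hσ => ?_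
        obtain ⟨hσf, rfl⟩ := mem_filter.1 hσ
        rw [mul_sum, mul_sum]
        refine sum_congr rfl fun x hx => ?_
        rw [X.W_insert hσf ((X.mem_linkVerts).1 hx).1]
        ring

theorem downOp_eq_sum_linkPi (f : Finset V → ℝ) (α : Finset V) :
    X.downOp f α = ∑ x ∈ X.linkVerts α, X.linkPi α {x} * f (insert x α) := by
  rw [downOp, X.sum_cofaces_eq_sum_linkVerts]
  refine sum_congr rfl fun x hx => ?_
  rw [X.linkPi_singleton ((X.mem_linkVerts).1 hx).1]
  ring

theorem downOp_const {α : Finset V} (hα : α ∈ X.faces) (hαd : α.card ≤ d) (c : ℝ) :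
    X.downOp (fun _ => c) α = c := by
  rw [downOp_eq_sum_linkPi, ← sum_mul, X.sum_linkPi_singleton hα hαd, one_mul]

theorem inn_upOp (m : ℕ) (f g : Finset V → ℝ) :
    X.inn (m + 1) (upOp f) g = X.inn m f (X.downOp g) := by
  calc X.inn (m + 1) (upOp f) g = 1 / (m + 1) * ∑ β ∈ X.faces.filter (·.card = m + 1),
        X.W (m + 1) β * ∑ x ∈ β, f (β.erase x) * g β := by
        rw [inn, mul_sum]
        refine sum_congr rfl fun β hβ => ?_
        rw [upOp, (mem_filter.1 hβ).2, ← sum_mul]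
        push_cast
        ring
    _ = X.inn m f (X.downOp g) := by
        rw [X.sum_W_mul_sum_erase m fun σ β => f σ * g β, ← mul_assoc,
          one_div_mul_cancel (by positivity), one_mul, inn]
        refine sum_congr rfl fun σ _ => ?_
        rw [downOp_eq_sum_linkPi, mul_sum, mul_sum]
        exact sum_congr rfl fun x _ => by ring

theorem inn_downOp (m : ℕ) (f g : Finset V → ℝ) :
    X.inn m (X.downOp f) g = X.inn (m + 1) f (upOp g) := by
  rw [X.inn_comm, ← X.inn_upOp, X.inn_comm]

theorem inn_self_eq_sum_linkInner (m : ℕ) (f : Finset V → ℝ) :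
    X.inn (m + 1) f f = ∑ σ ∈ X.faces.filter (·.card = m),
      X.W m σ * X.linkInner σ (fun x => f (insert x σ)) (fun x => f (insert x σ)) := by
  calc X.inn (m + 1) f f = 1 / (m + 1) * ∑ β ∈ X.faces.filter (·.card = m + 1),
        X.W (m + 1) β * ∑ x ∈ β, f β * f β := by
        rw [inn, mul_sum]
        refine sum_congr rfl fun β hβ => ?_
        rw [sum_const, (mem_filter.1 hβ).2, nsmul_eq_mul]
        push_cast
        field_simp
    _ = _ := by
        rw [X.sum_W_mul_sum_erase m fun _ β => f β * f β, ← mul_assoc,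
          one_div_mul_cancel (by positivity), one_mul]
        refine sum_congr rfl fun σ _ => ?_
        rw [linkInner]
        simp only [mul_assoc]

theorem inn_downOp_self_le {m : ℕ} (hm : m ≤ d) (f : Finset V → ℝ) :
    X.inn m (X.downOp f) (X.downOp f) ≤ X.inn (m + 1) f f := by
  rw [X.inn_self_eq_sum_linkInner]
  refine sum_le_sum fun σ hσ => ?_
  obtain ⟨hσf, rfl⟩ := mem_filter.1 hσ
  have hmean : X.downOp f σ = X.linkInner σ (fun _ => 1) (fun x => f (insert x σ)) := by
    rw [downOp_eq_sum_linkPi, linkInner]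
    simp only [mul_one]
  have hone : X.linkInner σ (fun _ => 1) (fun _ => 1) = 1 := by
    simpa only [linkInner, mul_one] using X.sum_linkPi_singleton hσf hm
  rw [mul_assoc]
  gcongr
  · exact X.W_nonneg _ _
  · calc X.downOp f σ * X.downOp f σ
        ≤ X.linkInner σ (fun _ => 1) (fun _ => 1) *
          X.linkInner σ (fun x => f (insert x σ)) (fun x => f (insert x σ)) := by
          rw [← sq, hmean]; exact sq_wInner_le (fun _ _ => X.linkPi_nonneg _ _) _ _
      _ = _ := by rw [hone, one_mul]

theorem inn_upOp_self_le {m : ℕ} (hm : m ≤ d) (f : Finset V → ℝ) :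
    X.inn (m + 1) (upOp f) (upOp f) ≤ X.inn m f f :=
  wInner_self_le_of_adjoint (fun _ _ => X.W_nonneg _ _) (fun _ _ => X.W_nonneg _ _)
    (X.inn_downOp m) (X.inn_downOp_self_le hm) f

theorem lam2_downUp_eq_lam2_upDown {m : ℕ} (hm : m ≤ d) :
    X.lam2 (m + 1) X.downUp = X.lam2 m X.upDown := by
  have hW : ∀ n, ∀ α ∈ X.faces.filter (·.card = n), 0 ≤ X.W n α := fun _ _ _ => X.W_nonneg _ _
  refine le_antisymm (rayleighSup_comp_le (hW _) (hW _) (X.inn_downOp m) (fun β hβ => ?_)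
    (X.inn_upOp_self_le hm)) (rayleighSup_comp_le (hW _) (hW _) (X.inn_upOp m) (fun α hα => ?_)
    (X.inn_downOp_self_le hm))
  · exact upOp_const (card_pos.1 (by rw [(mem_filter.1 hβ).2]; omega)) 1
  · obtain ⟨hαf, rfl⟩ := mem_filter.1 hα
    exact X.downOp_const hαf hm 1

theorem lam2_le {m : ℕ} {M : (Finset V → ℝ) → Finset V → ℝ} {B : ℝ} (hB : 0 ≤ B)
    (h : ∀ f, X.inn m f (fun _ => 1) = 0 → X.inn m f f ≠ 0 → X.inn m f (M f) ≤ B * X.inn m f f) :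
    X.lam2 m M ≤ B :=
  rayleighSup_le (fun _ _ => X.W_nonneg _ _) hB h

theorem inn_downUp_le_lam2_mul {m : ℕ} (hm : m ≤ d) {f : Finset V → ℝ}
    (h1 : X.inn (m + 1) f (fun _ => 1) = 0) (h2 : X.inn (m + 1) f f ≠ 0) :
    X.inn (m + 1) f (X.downUp f) ≤ X.lam2 (m + 1) X.downUp * X.inn (m + 1) f f :=
  wInner_le_rayleighSup_mul (fun _ _ => X.W_nonneg _ _) (bddAbove_rayleighQuotients
    (fun _ _ => X.W_nonneg _ _) fun f =>
      (X.inn_downOp m f (X.downOp f)).symm.trans_le (X.inn_downOp_self_le hm f)) h1 h2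

theorem lam2_zero (M : (Finset V → ℝ) → Finset V → ℝ) : X.lam2 0 M = 0 := by
  have h0 : X.faces.filter (·.card = 0) = {∅} := by
    ext α
    simp only [mem_filter, card_eq_zero, mem_singleton, and_iff_right_iff_imp]
    rintro rfl
    exact X.empty_mem
  refine (congrArg sSup (Set.eq_empty_of_forall_notMem ?_)).trans Real.sSup_empty
  rintro r ⟨f, h1, h2, -⟩
  simp only [inn, h0, sum_singleton, mul_one] at h1 h2
  exact h2 (by rw [h1, zero_mul])

theorem linkPi_pair {α : Finset V} {x y : V} (hx : x ∉ α) (hy : y ∉ α) (hxy : x ≠ y) :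
    X.linkPi α {x, y} = 2 * X.W (α.card + 2) (insert y (insert x α))
      / ((α.card + 2) * (α.card + 1) * X.W α.card α) := by
  have hu : α ∪ {x, y} = insert y (insert x α) := by
    ext a; simp only [mem_union, mem_insert, mem_singleton]; tauto
  have hc : (insert y (insert x α)).card = α.card + 2 := by
    rw [card_insert_of_notMem (by simp [hy, Ne.symm hxy]), card_insert_of_notMem hx]
  have h1 : ((α.card + 2 : ℕ) : ℝ) - 1 = α.card + 1 := by push_cast; ring
  rw [linkPi, hu, hc, Nat.choose_symm_add, Nat.cast_choose_two, h1]
  push_cast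
  rcases eq_or_ne (X.W α.card α) 0 with h0 | h0
  · simp [h0]
  · field_simp

theorem mem_linkVerts_insert_comm {α : Finset V} {x y : V} :
    x ∈ X.linkVerts α ∧ y ∈ X.linkVerts (insert x α) ↔
      y ∈ X.linkVerts α ∧ x ∈ X.linkVerts (insert y α) := by
  suffices h : ∀ x y, x ∈ X.linkVerts α ∧ y ∈ X.linkVerts (insert x α) →
      y ∈ X.linkVerts α ∧ x ∈ X.linkVerts (insert y α) from ⟨h x y, h y x⟩
  intro x y
  simp only [X.mem_linkVerts, mem_insert, not_or]
  rintro ⟨⟨hxα, -⟩, ⟨hyx, hyα⟩, hyxα⟩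
  rw [insert_comm] at hyxα
  exact ⟨⟨hyα, X.down_closed _ hyxα _ (subset_insert _ _)⟩, ⟨Ne.symm hyx, hxα⟩, hyxα⟩

theorem linkPi_mul_linkPi_insert {α : Finset V} {x y : V} (hx : x ∈ X.linkVerts α)
    (hy : y ∈ X.linkVerts (insert x α)) :
    X.linkPi α {x} * X.linkPi (insert x α) {y} = X.linkPi α {x, y} / 2 := by
  have := X.W_pos (X.mem_faces_of_mem_linkVerts hx)
  rw [X.mem_linkVerts] at hx hy
  have hyα : y ∉ α := fun h => hy.1 (mem_insert_of_mem h)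
  have hxy : x ≠ y := fun h => hy.1 (h ▸ mem_insert_self x α)
  have hαx := X.W_pos hx.2
  rw [X.linkPi_singleton hx.1, X.linkPi_singleton hy.1, X.linkPi_pair hx.1 hyα hxy,
    card_insert_of_notMem hx.1]
  rw [card_insert_of_notMem hx.1] at hαx
  push_cast
  field_simp
  ring

theorem sum_linkPi_mul_sum_linkPi_comm (α : Finset V) (F : V → V → ℝ) :
    ∑ x ∈ X.linkVerts α, X.linkPi α {x} * ∑ y ∈ X.linkVerts (insert x α),
        X.linkPi (insert x α) {y} * F x y
      = ∑ y ∈ X.linkVerts α, X.linkPi α {y} * ∑ x ∈ X.linkVerts (insert y α),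
        X.linkPi (insert y α) {x} * F x y := by
  have h : ∀ x ∈ X.linkVerts α, X.linkPi α {x} * ∑ y ∈ X.linkVerts (insert x α),
      X.linkPi (insert x α) {y} * F x y
        = ∑ y ∈ X.linkVerts (insert x α), X.linkPi α {x, y} / 2 * F x y := fun x hx => by
    rw [mul_sum]
    exact sum_congr rfl fun y hy => by rw [← X.linkPi_mul_linkPi_insert hx hy, mul_assoc]
  have h' : ∀ y ∈ X.linkVerts α, X.linkPi α {y} * ∑ x ∈ X.linkVerts (insert y α),
      X.linkPi (insert y α) {x} * F x y
        = ∑ x ∈ X.linkVerts (insert y α), X.linkPi α {x, y} / 2 * F x y := fun y hy => by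
    rw [mul_sum]
    exact sum_congr rfl fun x hx => by
      rw [pair_comm, ← X.linkPi_mul_linkPi_insert hy hx, mul_assoc]
  rw [sum_congr rfl h, sum_congr rfl h']
  exact sum_comm' fun x y => (X.mem_linkVerts_insert_comm).trans and_comm

theorem linkWalk_eq_sum {α : Finset V} (g : V → ℝ) {x : V} (hx : x ∈ X.linkVerts α) :
    X.linkWalk α g x = ∑ y ∈ X.linkVerts (insert x α), X.linkPi (insert x α) {y} * g y := by
  have hfilter : (X.linkVerts α).filter (fun y => y ≠ x ∧ insert y (insert x α) ∈ X.faces)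
      = X.linkVerts (insert x α) := by
    ext y
    simp only [mem_filter, X.mem_linkVerts, mem_insert, not_or]
    constructor
    · rintro ⟨⟨hyα, -⟩, hyx, hyxα⟩
      exact ⟨⟨hyx, hyα⟩, hyxα⟩
    · rintro ⟨⟨hyx, hyα⟩, hyxα⟩
      rw [insert_comm] at hyxα
      exact ⟨⟨hyα, X.down_closed _ hyxα _ (subset_insert _ _)⟩, hyx, insert_comm x y α ▸ hyxα⟩
  have hπ := X.linkPi_singleton_pos hx
  rw [linkWalk, hfilter]
  refine sum_congr rfl fun y hy => congrArg (· * g y) ?_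
  rw [div_eq_iff (by positivity)]
  linear_combination -2 * X.linkPi_mul_linkPi_insert hx hy

noncomputable def linkKernel (α : Finset V) (x y : V) : ℝ :=
  if y ≠ x ∧ insert y (insert x α) ∈ X.faces then X.linkPi α {x, y} / (2 * X.linkPi α {x}) else 0

theorem linkWalk_eq_kernelOp (α : Finset V) :
    X.linkWalk α = kernelOp (X.linkVerts α) (X.linkKernel α) := by
  funext g x
  simp only [linkWalk, kernelOp, linkKernel, sum_filter, ite_mul, zero_mul]

theorem isReversibleChain_link {α : Finset V} (hα : α ∈ X.faces) (hαd : α.card + 1 ≤ d) :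
    IsReversibleChain (X.linkVerts α) (fun x => X.linkPi α {x}) (X.linkKernel α) where
  weight_pos _ hx := X.linkPi_singleton_pos hx
  sum_weight := X.sum_linkPi_singleton hα (by omega)
  kernel_nonneg x _ y _ := by
    rw [linkKernel]
    split_ifs
    exacts [div_nonneg (X.linkPi_nonneg _ _) (mul_nonneg zero_le_two (X.linkPi_nonneg _ _)),
      le_rfl]
  sum_kernel x hx := by
    have h := X.linkWalk_eq_sum (fun _ => 1) hx
    rw [X.linkWalk_eq_kernelOp] at h
    simp only [kernelOp, mul_one] at h
    rw [h, X.sum_linkPi_singleton ((X.mem_linkVerts).1 hx).2]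
    rw [card_insert_of_notMem ((X.mem_linkVerts).1 hx).1]
    omega
  reversible x hx y hy := by
    have hπx := X.linkPi_singleton_pos hx
    have hπy := X.linkPi_singleton_pos hy
    have hcond : y ≠ x ∧ insert y (insert x α) ∈ X.faces ↔
        x ≠ y ∧ insert x (insert y α) ∈ X.faces := by
      rw [insert_comm, ne_comm]
    simp only [linkKernel, hcond, pair_comm y x]
    split_ifs
    · field_simp
    · simp

theorem linkInner_linkWalk_le {α : Finset V} (hα : α ∈ X.faces) (hαd : α.card + 1 ≤ d) {b : ℝ}
    (hb : X.linkLam2 α ≤ b) (g : V → ℝ) :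
    X.linkInner α g (X.linkWalk α g)
      ≤ b * (X.linkInner α g g - (∑ x ∈ X.linkVerts α, X.linkPi α {x} * g x) ^ 2)
        + (∑ x ∈ X.linkVerts α, X.linkPi α {x} * g x) ^ 2 := by
  rw [linkLam2_eq_rayleighSup, linkWalk_eq_kernelOp] at hb
  rw [linkWalk_eq_kernelOp]
  exact (X.isReversibleChain_link hα hαd).wInner_kernelOp_le_of_rayleighSup_le hb g

theorem sum_linkPi_mul_linkWalk {α : Finset V} (hα : α ∈ X.faces) (hαd : α.card + 1 ≤ d)
    (g : V → ℝ) :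
    ∑ x ∈ X.linkVerts α, X.linkPi α {x} * X.linkWalk α g x
      = ∑ x ∈ X.linkVerts α, X.linkPi α {x} * g x := by
  rw [linkWalk_eq_kernelOp]
  exact (X.isReversibleChain_link hα hαd).sum_mul_kernelOp g

theorem sum_linkPi_mul_linkInner {α : Finset V} (hαd : α.card + 1 ≤ d) (g : V → ℝ) :
    ∑ x ∈ X.linkVerts α, X.linkPi α {x} * X.linkInner (insert x α) g g = X.linkInner α g g := by
  simp only [linkInner, mul_assoc]
  rw [X.sum_linkPi_mul_sum_linkPi_comm α fun _ y => g y * g y]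
  refine sum_congr rfl fun y hy => ?_
  rw [← sum_mul, X.sum_linkPi_singleton ((X.mem_linkVerts).1 hy).2, one_mul]
  rw [card_insert_of_notMem ((X.mem_linkVerts).1 hy).1]
  omega

theorem linkInner_linkWalk_eq_sum {α : Finset V} (hαd : α.card + 2 ≤ d) (g : V → ℝ) :
    X.linkInner α g (X.linkWalk α g) = ∑ x ∈ X.linkVerts α,
      X.linkPi α {x} * X.linkInner (insert x α) g (X.linkWalk (insert x α) g) := by
  simp only [linkInner, mul_assoc]
  rw [X.sum_linkPi_mul_sum_linkPi_comm α fun x y => g y * X.linkWalk (insert x α) g y]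
  refine sum_congr rfl fun y hy => congrArg (X.linkPi α {y} * ·) ?_
  have hyα := (X.mem_linkVerts).1 hy
  have hyd : (insert y α).card + 1 ≤ d := by rw [card_insert_of_notMem hyα.1]; omega
  have hswap : ∀ x ∈ X.linkVerts (insert y α),
      X.linkWalk (insert x α) g y = X.linkWalk (insert y α) g x := fun x hx => by
    obtain ⟨-, hyx⟩ := (X.mem_linkVerts_insert_comm).2 ⟨hy, hx⟩
    rw [X.linkWalk_eq_sum g hyx, X.linkWalk_eq_sum g hx, insert_comm]
  rw [sum_congr rfl fun x hx => by rw [hswap x hx, mul_left_comm], ← mul_sum,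
    X.sum_linkPi_mul_linkWalk hyα.2 hyd, X.linkWalk_eq_sum g hy]

theorem mul_linkInner_self_le_of_eigen {α : Finset V} (hαd : α.card + 2 ≤ d) {c : ℝ}
    (hlinks : ∀ x ∈ X.linkVerts α, X.linkLam2 (insert x α) ≤ c) {g : V → ℝ} {l : ℝ}
    (hg : ∀ x ∈ X.linkVerts α, X.linkWalk α g x = l * g x) :
    l * X.linkInner α g g ≤ (c + (1 - c) * l ^ 2) * X.linkInner α g g := by
  -- the mean of `g` on the link of `α ∪ {x}` is `(M_α g)(x) = l * g x`
  have hmean : ∀ x ∈ X.linkVerts α,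
      ∑ y ∈ X.linkVerts (insert x α), X.linkPi (insert x α) {y} * g y = l * g x := fun x hx => by
    rw [← X.linkWalk_eq_sum g hx, hg x hx]
  calc l * X.linkInner α g g = X.linkInner α g (X.linkWalk α g) := by
        rw [linkInner, linkInner, mul_sum]
        exact sum_congr rfl fun x hx => by rw [hg x hx]; ring
    _ = ∑ x ∈ X.linkVerts α, X.linkPi α {x} *
          X.linkInner (insert x α) g (X.linkWalk (insert x α) g) :=
        X.linkInner_linkWalk_eq_sum hαd g
    _ ≤ ∑ x ∈ X.linkVerts α, X.linkPi α {x} *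
          (c * (X.linkInner (insert x α) g g - (l * g x) ^ 2) + (l * g x) ^ 2) := by
        refine sum_le_sum fun x hx => mul_le_mul_of_nonneg_left ?_ (X.linkPi_nonneg _ _)
        have hx' := (X.mem_linkVerts).1 hx
        rw [← hmean x hx]
        exact X.linkInner_linkWalk_le hx'.2 (by rw [card_insert_of_notMem hx'.1]; omega)
          (hlinks x hx) g
    _ = (c + (1 - c) * l ^ 2) * X.linkInner α g g := by
        have e : ∀ x ∈ X.linkVerts α, X.linkPi α {x} *
            (c * (X.linkInner (insert x α) g g - (l * g x) ^ 2) + (l * g x) ^ 2)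
            = c * (X.linkPi α {x} * X.linkInner (insert x α) g g)
              + (1 - c) * l ^ 2 * (X.linkPi α {x} * g x * g x) := fun _ _ => by ring
        rw [sum_congr rfl e, sum_add_distrib, ← mul_sum, ← mul_sum,
          X.sum_linkPi_mul_linkInner (by omega), ← linkInner]
        ring

theorem linkLam2_le_div {α : Finset V} (hα : α ∈ X.faces) (hαd : α.card + 2 ≤ d) {c : ℝ}
    (hc0 : 0 ≤ c) (hc1 : c < 1) (hlinks : ∀ x ∈ X.linkVerts α, X.linkLam2 (insert x α) ≤ c)
    (hα1 : X.linkLam2 α < 1) :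
    X.linkLam2 α ≤ c / (1 - c) := by
  have hchain := X.isReversibleChain_link hα (by omega)
  rcases (rayleighQuotients (X.linkVerts α) (fun x => X.linkPi α {x})
    (kernelOp (X.linkVerts α) (X.linkKernel α))).eq_empty_or_nonempty with hempty | hne
  · rw [linkLam2_eq_rayleighSup, linkWalk_eq_kernelOp, rayleighSup, hempty, Real.sSup_empty]
    exact div_nonneg hc0 (by linarith)
  obtain ⟨g, -, hg0, hgeig⟩ := hchain.exists_eigenfunction hne
  rw [← linkWalk_eq_kernelOp, ← linkLam2_eq_rayleighSup] at hgeig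
  have hl := le_of_mul_le_mul_right (X.mul_linkInner_self_le_of_eigen hαd hlinks hgeig)
    ((wInner_self_nonneg hchain.weight_nonneg g).lt_of_ne' hg0)
  -- `l ≤ c + (1 - c) l²` factors as `(1 - l) ((1 - c) l - c) ≤ 0`
  rw [le_div_iff₀ (by linarith)]
  nlinarith

theorem linkLam2_le_gammaC {α : Finset V} (hα : α ∈ X.faces) :
    X.linkLam2 α ≤ X.gammaC α.card :=
  le_csSup ((Set.finite_range X.linkLam2).subset
    (by rintro _ ⟨β, -, -, rfl⟩; exact ⟨β, rfl⟩)).bddAbove ⟨α, hα, rfl, rfl⟩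

theorem gammaC_le {m : ℕ} {c : ℝ} (hc : 0 ≤ c)
    (h : ∀ α ∈ X.faces, α.card = m → X.linkLam2 α ≤ c) : X.gammaC m ≤ c :=
  Real.sSup_le (by rintro _ ⟨α, hα, hαm, rfl⟩; exact h α hα hαm) hc

theorem gammaC_le_div {m : ℕ} (hm : m + 2 ≤ d) {c : ℝ} (hc0 : 0 ≤ c) (hc1 : c < 1)
    (hsucc : X.gammaC (m + 1) ≤ c) (hm1 : X.gammaC m < 1) : X.gammaC m ≤ c / (1 - c) := by
  refine X.gammaC_le (div_nonneg hc0 (by linarith)) fun α hα hαm => ?_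
  subst hαm
  refine X.linkLam2_le_div hα hm hc0 hc1 (fun x hx => ?_) ((X.linkLam2_le_gammaC hα).trans_lt hm1)
  have hx' := (X.mem_linkVerts).1 hx
  have := X.linkLam2_le_gammaC hx'.2
  rw [card_insert_of_notMem hx'.1] at this
  exact this.trans hsucc

theorem gammaC_le_one_div_add_two {k : ℕ} (hkd : k ≤ d)
    (hγ : X.gammaC (k - 1) ≤ 1 / ((k : ℝ) + 1)) (hconn : ∀ m < k, X.gammaC m < 1) :
    ∀ j < k, X.gammaC j ≤ 1 / ((j : ℝ) + 2) := by
  intro j hj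
  obtain ⟨n, hn⟩ : ∃ n, k = j + 1 + n := ⟨k - (j + 1), by omega⟩
  induction n generalizing j with
  | zero =>
    subst hn
    simpa [add_assoc, one_add_one_eq_two] using hγ
  | succ n ih =>
    have h := ih (j + 1) (by omega) (by omega)
    have hj3 : (0 : ℝ) < j + 3 := by positivity
    calc X.gammaC j ≤ (1 / ((j : ℝ) + 3)) / (1 - 1 / ((j : ℝ) + 3)) :=
          X.gammaC_le_div (by omega) (by positivity) (by rw [div_lt_one hj3]; linarith)
            (h.trans_eq (by push_cast; ring)) (hconn j hj)
      _ = 1 / ((j : ℝ) + 2) := by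
          rw [one_sub_div hj3.ne', show (j : ℝ) + 3 - 1 = j + 2 by ring]
          field_simp

theorem upDown_apply {β : Finset V} (hβ : β ∈ X.faces) (hβd : β.card ≤ d) (f : Finset V → ℝ) :
    X.upDown f β = (f β + ∑ z ∈ β, ∑ y ∈ X.linkVerts β,
      X.linkPi β {y} * f (insert y (β.erase z))) / (β.card + 1) := by
  have h : ∀ y ∈ X.linkVerts β, X.linkPi β {y} * upOp f (insert y β)
      = (X.linkPi β {y} * f β + ∑ z ∈ β, X.linkPi β {y} * f (insert y (β.erase z)))
        / (β.card + 1) := fun y hy => by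
    rw [upOp_insert ((X.mem_linkVerts).1 hy).1, mul_div_assoc', mul_add, mul_sum]
  rw [upDown, downOp_eq_sum_linkPi, sum_congr rfl h, ← sum_div, sum_add_distrib, ← sum_mul,
    X.sum_linkPi_singleton hβ hβd, one_mul, sum_comm]

theorem inn_upDown {m : ℕ} (hm : m + 1 ≤ d) (f : Finset V → ℝ) :
    X.inn (m + 1) f (X.upDown f) = (X.inn (m + 1) f f + (m + 1) *
      ∑ σ ∈ X.faces.filter (·.card = m), X.W m σ * X.linkInner σ (fun x => f (insert x σ))
        (X.linkWalk σ fun x => f (insert x σ))) / (m + 2) := by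
  calc X.inn (m + 1) f (X.upDown f)
      = (X.inn (m + 1) f f + ∑ β ∈ X.faces.filter (·.card = m + 1), X.W (m + 1) β *
          ∑ z ∈ β, f β * ∑ y ∈ X.linkVerts β, X.linkPi β {y} * f (insert y (β.erase z)))
        / (m + 2) := by
        rw [inn, inn, ← sum_add_distrib, sum_div]
        refine sum_congr rfl fun β hβ => ?_
        obtain ⟨hβf, hβc⟩ := mem_filter.1 hβ
        rw [X.upDown_apply hβf (by omega), hβc, ← mul_sum]
        push_cast
        ring
    _ = _ := by
        rw [X.sum_W_mul_sum_erase m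
          fun σ β => f β * ∑ y ∈ X.linkVerts β, X.linkPi β {y} * f (insert y σ)]
        congr 3
        refine sum_congr rfl fun σ _ => congrArg (X.W m σ * ·) ?_
        rw [linkInner]
        refine sum_congr rfl fun x hx => ?_
        rw [X.linkWalk_eq_sum _ hx, mul_assoc]

theorem lam2_upDown_le {m : ℕ} (hm : m + 1 ≤ d) {γ R : ℝ} (hγ : X.gammaC m ≤ γ) (hγ0 : 0 ≤ γ)
    (hγ1 : γ ≤ 1) (hR0 : 0 ≤ R) (hR : X.lam2 (m + 1) X.downUp ≤ R) :
    X.lam2 (m + 1) X.upDown ≤ (1 + (m + 1) * (γ + (1 - γ) * R)) / (m + 2) := by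
  refine X.lam2_le (by positivity) fun f h1 h2 => ?_
  have hlocal : ∑ σ ∈ X.faces.filter (·.card = m), X.W m σ *
      X.linkInner σ (fun x => f (insert x σ)) (X.linkWalk σ fun x => f (insert x σ))
      ≤ γ * X.inn (m + 1) f f + (1 - γ) * X.inn m (X.downOp f) (X.downOp f) := by
    rw [X.inn_self_eq_sum_linkInner, inn, mul_sum, mul_sum, ← sum_add_distrib]
    refine sum_le_sum fun σ hσ => ?_
    obtain ⟨hσf, rfl⟩ := mem_filter.1 hσ
    have h := X.linkInner_linkWalk_le hσf hm ((X.linkLam2_le_gammaC hσf).trans hγ)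
      fun x => f (insert x σ)
    rw [← downOp_eq_sum_linkPi] at h
    calc _ ≤ X.W σ.card σ * (γ * (X.linkInner σ (fun x => f (insert x σ))
          (fun x => f (insert x σ)) - X.downOp f σ ^ 2) + X.downOp f σ ^ 2) := by
          gcongr; exact X.W_nonneg _ _
      _ = _ := by ring
  have hdown : X.inn m (X.downOp f) (X.downOp f) ≤ R * X.inn (m + 1) f f := by
    rw [X.inn_downOp]
    exact (X.inn_downUp_le_lam2_mul (by omega) h1 h2).trans
      (by gcongr; exact wInner_self_nonneg (fun _ _ => X.W_nonneg _ _) f)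
  rw [X.inn_upDown hm]
  calc (X.inn (m + 1) f f + (m + 1) * _) / (m + 2)
      ≤ (X.inn (m + 1) f f + (m + 1) *
          (γ * X.inn (m + 1) f f + (1 - γ) * (R * X.inn (m + 1) f f))) / (m + 2) := by
        gcongr
        exact hlocal.trans (by gcongr)
    _ = _ := by ring

theorem lam2_downUp_le {k : ℕ} (hkd : k ≤ d) (hγ : ∀ j < k, X.gammaC j ≤ 1 / ((j : ℝ) + 2)) :
    X.lam2 (k + 1) X.downUp ≤ 1 - 1 / ((k : ℝ) + 1) ^ 2 := by
  induction k with
  | zero => simp [X.lam2_downUp_eq_lam2_upDown (Nat.zero_le d), lam2_zero]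
  | succ k ih =>
    have hR := ih (by omega) fun j hj => hγ j (by omega)
    rw [X.lam2_downUp_eq_lam2_upDown hkd]
    refine (X.lam2_upDown_le hkd (hγ k (by omega)) (by positivity) ?_ ?_ hR).trans_eq ?_
    · rw [div_le_one (by positivity)]
      linarith
    · rw [sub_nonneg, div_le_one (by positivity)]
      nlinarith [Nat.cast_nonneg (α := ℝ) k]
    · push_cast
      field_simp
      ring

end WSC

theorem lam2_downUp_le_of_gamma_general {V : Type*} [DecidableEq V] [Fintype V] {d : ℕ}
    (X : WSC V d) (k : ℕ) (hkd : k ≤ d)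
    (hγ : X.gammaC (k - 1) ≤ 1 / ((k : ℝ) + 1))
    (hconn : ∀ m : ℕ, m < k → X.gammaC m < 1) :
    X.lam2 (k + 1) X.downUp = X.lam2 k X.upDown ∧
    X.lam2 (k + 1) X.downUp ≤ 1 - 1 / ((k : ℝ) + 1) ^ 2 :=
  ⟨X.lam2_downUp_eq_lam2_upDown hkd,
    X.lam2_downUp_le hkd (X.gammaC_le_one_div_add_two hkd hγ hconn)⟩

/-- **Corollary.** Let `(X, Π)` be a weighted pure `d`-dimensional simplicial
complex and `1 ≤ k ≤ d`.  If `γ_{k-2} ≤ 1/(k+1)` and `γ_j < 1` for all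
`-1 ≤ j ≤ k-2` (i.e. `X.gammaC m < 1` for all cardinalities `m < k`), then
`λ₂(P∨_k) = λ₂(P∧_{k-1}) ≤ 1 - 1/(k+1)²`. -/
theorem lam2_downUp_le_of_gamma {V : Type*} [DecidableEq V] [Fintype V] {d : ℕ}
    (X : WSC V d) (k : ℕ) (hk1 : 1 ≤ k) (hkd : k ≤ d)
    (hγ : X.gammaC (k - 1) ≤ 1 / ((k : ℝ) + 1))
    (hconn : ∀ m : ℕ, m < k → X.gammaC m < 1) :
    X.lam2 (k + 1) X.downUp = X.lam2 k X.upDown ∧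
    X.lam2 (k + 1) X.downUp ≤ 1 - 1 / ((k : ℝ) + 1) ^ 2 :=
  lam2_downUp_le_of_gamma_general X k hkd hγ hconn
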